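/- arXiv:1909.03842 — 4 statements merged into one kernel-verified Lean document; each statement's English description precedes it below -/
import Mathlib

section
/- Fix n ∈ ℕ, continuous coefficient functions c : Fin n → Fin n → (Fin n → ℝ) → ℝ, b : Fin n → (Fin n → ℝ) → ℝ and q : (Fin n → ℝ) → ℝ, and define for twice continuously differentiable u : (Fin n → ℝ) → ℂ the second-order operator E u (x) = ∑_{i,j} c i j x • ∂ᵢ∂ⱼu(x) + ∑_i b i x • ∂ᵢu(x) + q x • u(x), where ∂ᵢu(x) := fderiv ℝ u x (Pi.single i 1). Let S : (Fin n → ℝ) → ℝ and A : (Fin n → ℝ) → ℂ be C² (ContDiff ℝ 2), let x₀ : Fin n → ℝ, and for λ > 0 set u_λ(x) := Complex.exp (Complex.I * S x / λ) * A x. Then, as λ tends to 0 from the right, (λ : ℂ)² * Complex.exp (−Complex.I * S x₀ / λ) * (E u_λ)(x₀) tends to −(∑_{i,j} c i j x₀ * ∂ᵢS(x₀) * ∂ⱼS(x₀)) * A x₀. -/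
open Filter

/-- The second-order linear differential operator
`E u (x) = ∑ᵢⱼ c i j x • ∂ᵢ∂ⱼ u (x) + ∑ᵢ b i x • ∂ᵢ u (x) + q x • u (x)`,
where `∂ᵢ u (x) := fderiv ℝ u x (Pi.single i 1)`. -/
noncomputable def secondOrderOp {n : ℕ}
    (c : Fin n → Fin n → (Fin n → ℝ) → ℝ)
    (b : Fin n → (Fin n → ℝ) → ℝ)
    (q : (Fin n → ℝ) → ℝ)
    (u : (Fin n → ℝ) → ℂ) (x : Fin n → ℝ) : ℂ :=
  (∑ i, ∑ j, c i j x •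
      fderiv ℝ (fun y => fderiv ℝ u y (Pi.single j 1)) x (Pi.single i 1))
    + (∑ i, b i x • fderiv ℝ u x (Pi.single i 1))
    + q x • u x

/-!
Conjugating the operator by the phase, `e^{-μS} E (e^{μS} A)`, gives a polynomial of degree two
in `μ` whose leading coefficient is the principal symbol at the covector `dS`, times `A`: every
factor `μ` comes from differentiating the phase once. With `μ = i/λ`, multiplying by `λ²` turns
this into `-σ(x₀, dS) A(x₀) + O(λ)`.
-/

open Complex

section Conjugation

variable {E : Type*} [NormedAddCommGroup E] [NormedSpace ℝ E]

theorem hasFDerivAt_cexp_mul_ofReal (μ : ℂ) {S : E → ℝ} {S' : E →L[ℝ] ℝ} {x : E}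
    (hS : HasFDerivAt S S' x) :
    HasFDerivAt (fun y => exp (μ * S y)) (exp (μ * S x) • μ • ofRealCLM.comp S') x :=
  ((ofRealCLM.hasFDerivAt.comp x hS).const_mul μ).cexp

theorem fderiv_cexp_mul_ofReal_mul_apply (μ : ℂ) {S : E → ℝ} {A : E → ℂ} {x : E}
    (hS : DifferentiableAt ℝ S x) (hA : DifferentiableAt ℝ A x) (w : E) :
    fderiv ℝ (fun y => exp (μ * S y) * A y) x w =
      exp (μ * S x) * (fderiv ℝ A x w + μ * (A x * fderiv ℝ S x w)) := by
  rw [((hasFDerivAt_cexp_mul_ofReal μ hS.hasFDerivAt).fun_mul hA.hasFDerivAt).fderiv]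
  simp only [add_apply, smul_apply,
    ContinuousLinearMap.comp_apply, ofRealCLM_apply, smul_eq_mul]
  ring

theorem differentiableAt_fderiv_apply {F : Type*} [NormedAddCommGroup F] [NormedSpace ℝ F]
    {f : E → F} {x : E} (hf : ContDiffAt ℝ 2 f x) (w : E) :
    DifferentiableAt ℝ (fun y => fderiv ℝ f y w) x :=
  ((hf.fderiv_right (m := 1) le_rfl).differentiableAt one_ne_zero).clm_apply
    (differentiableAt_const w)

theorem fderiv_fderiv_cexp_mul_ofReal_mul_apply (μ : ℂ) {S : E → ℝ} {A : E → ℂ} {x : E}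
    (hS : ContDiffAt ℝ 2 S x) (hA : ContDiffAt ℝ 2 A x) (v w : E) :
    fderiv ℝ (fun y => fderiv ℝ (fun z => exp (μ * S z) * A z) y w) x v =
      exp (μ * S x) * (fderiv ℝ (fun y => fderiv ℝ A y w) x v
        + μ * (fderiv ℝ A x v * fderiv ℝ S x w + fderiv ℝ S x v * fderiv ℝ A x w
          + A x * fderiv ℝ (fun y => fderiv ℝ S y w) x v)
        + μ ^ 2 * (A x * fderiv ℝ S x v * fderiv ℝ S x w)) := by
  have h_first : (fun y => fderiv ℝ (fun z => exp (μ * S z) * A z) y w) =ᶠ[nhds x]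
      fun y => exp (μ * S y) * (fderiv ℝ A y w + μ * (A y * fderiv ℝ S y w)) := by
    filter_upwards [hS.eventually (by simp), hA.eventually (by simp)] with y hSy hAy
    exact fderiv_cexp_mul_ofReal_mul_apply μ (hSy.differentiableAt two_ne_zero)
      (hAy.differentiableAt two_ne_zero) w
  have hS' : HasFDerivAt (fun y => (fderiv ℝ S y w : ℂ))
      (ofRealCLM.comp (fderiv ℝ (fun y => fderiv ℝ S y w) x)) x :=
    ofRealCLM.hasFDerivAt.comp x (differentiableAt_fderiv_apply hS w).hasFDerivAt
  have hA' := (differentiableAt_fderiv_apply hA w).hasFDerivAt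
  rw [h_first.fderiv_eq, ((hasFDerivAt_cexp_mul_ofReal μ
    (hS.differentiableAt two_ne_zero).hasFDerivAt).fun_mul
    (hA'.fun_add (((hA.differentiableAt two_ne_zero).hasFDerivAt.fun_mul hS').const_mul μ))).fderiv]
  simp only [add_apply, smul_apply,
    ContinuousLinearMap.comp_apply, ofRealCLM_apply, smul_eq_mul]
  ring

end Conjugation

def principalSymbol {n : ℕ} (c : Fin n → Fin n → (Fin n → ℝ) → ℝ) (x k : Fin n → ℝ) : ℝ :=
  ∑ i, ∑ j, c i j x * k i * k j

theorem exists_secondOrderOp_cexp_mul_eq_quadratic {n : ℕ}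
    (c : Fin n → Fin n → (Fin n → ℝ) → ℝ) (b : Fin n → (Fin n → ℝ) → ℝ) (q : (Fin n → ℝ) → ℝ)
    {S : (Fin n → ℝ) → ℝ} {A : (Fin n → ℝ) → ℂ} {x : Fin n → ℝ}
    (hS : ContDiffAt ℝ 2 S x) (hA : ContDiffAt ℝ 2 A x) :
    ∃ P₁ P₀ : ℂ, ∀ μ : ℂ, secondOrderOp c b q (fun y => exp (μ * S y) * A y) x =
      exp (μ * S x) * (μ ^ 2 * (principalSymbol c x (fun i => fderiv ℝ S x (Pi.single i 1)) * A x)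
        + μ * P₁ + P₀) := by
  refine ⟨∑ i, ∑ j, c i j x * (fderiv ℝ A x (Pi.single i 1) * fderiv ℝ S x (Pi.single j 1)
      + fderiv ℝ S x (Pi.single i 1) * fderiv ℝ A x (Pi.single j 1)
      + A x * fderiv ℝ (fun y => fderiv ℝ S y (Pi.single j 1)) x (Pi.single i 1))
      + ∑ i, b i x * (A x * fderiv ℝ S x (Pi.single i 1)),
    ∑ i, ∑ j, c i j x * fderiv ℝ (fun y => fderiv ℝ A y (Pi.single j 1)) x (Pi.single i 1)
      + ∑ i, b i x * fderiv ℝ A x (Pi.single i 1) + q x * A x, fun μ => ?_⟩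
  have h_quadratic : ∀ (r : ℝ) (e a b d : ℂ),
      r * (e * (a + μ * b + μ ^ 2 * d)) = e * μ ^ 2 * (r * d) + e * μ * (r * b) + e * (r * a) := by
    intros; ring
  have h_linear : ∀ (r : ℝ) (e a b : ℂ), r * (e * (a + μ * b)) = e * μ * (r * b) + e * (r * a) := by
    intros; ring
  have h_symbol : (principalSymbol c x (fun i => fderiv ℝ S x (Pi.single i 1)) : ℂ) * A x =
      ∑ i, ∑ j, c i j x * (A x * fderiv ℝ S x (Pi.single i 1) * fderiv ℝ S x (Pi.single j 1)) := by
    simp only [principalSymbol, ofReal_sum, ofReal_mul, Finset.sum_mul]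
    exact Finset.sum_congr rfl fun i _ => Finset.sum_congr rfl fun j _ => by ring
  simp only [secondOrderOp, real_smul, h_symbol,
    fderiv_fderiv_cexp_mul_ofReal_mul_apply μ hS hA,
    fderiv_cexp_mul_ofReal_mul_apply μ (hS.differentiableAt two_ne_zero)
      (hA.differentiableAt two_ne_zero), h_quadratic, h_linear, Finset.sum_add_distrib,
    ← Finset.mul_sum]
  ring

theorem sq_mul_quadratic_I_div {t : ℂ} (ht : t ≠ 0) (a b d : ℂ) :
    t ^ 2 * ((I / t) ^ 2 * a + I / t * b + d) = -a + I * t * b + t ^ 2 * d := by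
  field_simp
  linear_combination a * I_sq

theorem wkb_principal_symbol_limit_general {n : ℕ}
    (c : Fin n → Fin n → (Fin n → ℝ) → ℝ)
    (b : Fin n → (Fin n → ℝ) → ℝ)
    (q : (Fin n → ℝ) → ℝ)
    (S : (Fin n → ℝ) → ℝ) (A : (Fin n → ℝ) → ℂ)
    (hS : ContDiff ℝ 2 S) (hA : ContDiff ℝ 2 A)
    (x₀ : Fin n → ℝ) :
    Tendsto
      (fun lam : ℝ =>
        (lam : ℂ) ^ 2 * Complex.exp (-Complex.I * (S x₀ : ℂ) / (lam : ℂ)) *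
          secondOrderOp c b q
            (fun x => Complex.exp (Complex.I * (S x : ℂ) / (lam : ℂ)) * A x) x₀)
      (nhdsWithin 0 (Set.Ioi 0))
      (nhds (-((∑ i, ∑ j,
          c i j x₀ * fderiv ℝ S x₀ (Pi.single i 1) * fderiv ℝ S x₀ (Pi.single j 1) : ℝ) : ℂ)
        * A x₀)) := by
  obtain ⟨P₁, P₀, h_conj⟩ :=
    exists_secondOrderOp_cexp_mul_eq_quadratic c b q (x := x₀) hS.contDiffAt hA.contDiffAt
  set σ : ℂ := ↑(principalSymbol c x₀ fun i => fderiv ℝ S x₀ (Pi.single i 1))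
  have h_rescaled : ∀ lam : ℝ, lam ≠ 0 →
      (lam : ℂ) ^ 2 * exp (-I * S x₀ / lam) *
          secondOrderOp c b q (fun x => exp (I * S x / lam) * A x) x₀ =
        -σ * A x₀ + I * lam * P₁ + lam ^ 2 * P₀ := by
    intro lam hlam
    simp only [mul_div_right_comm I, h_conj]
    rw [mul_assoc, ← mul_assoc (exp _), ← exp_add,
      show -I * S x₀ / lam + I / lam * S x₀ = 0 by ring, exp_zero, one_mul,
      sq_mul_quadratic_I_div (ofReal_ne_zero.mpr hlam), neg_mul]
  have h_poly : Tendsto (fun t : ℝ => -σ * A x₀ + I * t * P₁ + t ^ 2 * P₀)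
      (nhdsWithin 0 (Set.Ioi 0)) (nhds (-σ * A x₀)) :=
    ((by fun_prop : Continuous fun t : ℝ => -σ * A x₀ + I * t * P₁ + t ^ 2 * P₀).tendsto' 0 _
      (by simp)).mono_left nhdsWithin_le_nhds
  exact h_poly.congr' (eventually_nhdsWithin_of_forall fun lam hlam =>
    (h_rescaled lam (ne_of_gt hlam)).symm)

/-- WKB / infinite-frequency limit: inserting the wave ansatz
`u_λ(x) = exp (I S x / λ) * A x` into the second-order operator `E`, one has
`λ² · exp (−I S x₀ / λ) · (E u_λ)(x₀) → −(∑ᵢⱼ c i j x₀ ∂ᵢS(x₀) ∂ⱼS(x₀)) · A x₀` as `λ → 0⁺`. -/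
theorem wkb_principal_symbol_limit {n : ℕ}
    (c : Fin n → Fin n → (Fin n → ℝ) → ℝ)
    (b : Fin n → (Fin n → ℝ) → ℝ)
    (q : (Fin n → ℝ) → ℝ)
    (hc : ∀ i j, Continuous (c i j)) (hb : ∀ i, Continuous (b i)) (hq : Continuous q)
    (S : (Fin n → ℝ) → ℝ) (A : (Fin n → ℝ) → ℂ)
    (hS : ContDiff ℝ 2 S) (hA : ContDiff ℝ 2 A)
    (x₀ : Fin n → ℝ) :
    Tendsto
      (fun lam : ℝ =>
        (lam : ℂ) ^ 2 * Complex.exp (-Complex.I * (S x₀ : ℂ) / (lam : ℂ)) *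
          secondOrderOp c b q
            (fun x => Complex.exp (Complex.I * (S x : ℂ) / (lam : ℂ)) * A x) x₀)
      (nhdsWithin 0 (Set.Ioi 0))
      (nhds (-((∑ i, ∑ j,
          c i j x₀ * fderiv ℝ S x₀ (Pi.single i 1) * fderiv ℝ S x₀ (Pi.single j 1) : ℝ) : ℂ)
        * A x₀)) :=
  wkb_principal_symbol_limit_general c b q S A hS hA x₀
end

section
/- Let N ∈ ℕ with N > 0. Fix arrays C : Fin N → Fin 4 → Fin N → Fin 4 → ℝ (written C B m A n for the vertical coefficients C^{Bm}_{An}), N₀ : Fin N → ℝ (the expansion point), K : Fin 4 → Fin 4 → ℝ, a : Fin N → ℝ and a₂ : Fin N → Fin N → ℝ. Assume: (i) K is traceless, ∑_m K m m = 0; (ii) the expansion point is invariant under K: for every A : Fin N, ∑_{D,m,n} N₀ D * C D m A n * K n m = 0; (iii) the second-order coefficient equation holds: for all B : Fin N and m, n : Fin 4, (∑_A a A * C B m A n) + 2·(∑_{A,D} a₂ A B * C D m A n * N₀ D) + a B * (if m = n then 1 else 0) = 0. Then the first-order coefficient a is itself invariant under K: for every B : Fin N, ∑_{A,m,n} a A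 * C B m A n * K n m = 0. -/
/-!
Read `m n ↦ C B m A n` as a matrix `C_{BA}`. The second-order equation says that the matrix
`∑_A a_A C_{BA} + 2 ∑_A a₂_{AB} ∑_D N₀_D C_{DA} + a_B 𝟙` vanishes; contracting it with `K`
means taking `trace (· * K)`. The middle term then contracts to a combination of the invariance
conditions of `N₀`, and the last one to `a_B · trace K = 0`, so only the contraction of `a`
survives.
-/

open Finset Matrix

namespace Matrix

variable {ι μ R : Type*} [Fintype μ]

theorem trace_mul_eq_sum_sum [NonUnitalNonAssocSemiring R] (X K : Matrix μ μ R) :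
    trace (X * K) = ∑ m, ∑ n, X m n * K n m := by
  simp only [trace, diag_apply, mul_apply]

theorem trace_sum_smul_mul [Fintype ι] [Semiring R] (w : ι → R) (Z : ι → Matrix μ μ R)
    (K : Matrix μ μ R) : trace ((∑ i, w i • Z i) * K) = ∑ i, w i * trace (Z i * K) := by
  simp only [sum_mul, smul_mul, trace_sum, trace_smul, smul_eq_mul]

theorem trace_mul_eq_zero_of_add_add_smul_one_eq_zero [DecidableEq μ] [Semiring R]
    {X Y K : Matrix μ μ R} {c : R} (h : X + Y + c • 1 = 0) (hY : trace (Y * K) = 0)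
    (hK : trace K = 0) : trace (X * K) = 0 := by
  have := congrArg (fun Z => trace (Z * K)) h
  simpa only [add_mul, smul_mul, one_mul, trace_add, trace_smul, hY, hK, smul_zero, add_zero,
    zero_mul, trace_zero] using this

end Matrix

theorem first_order_coefficient_lorentz_invariant_general
    (N : ℕ)
    (C : Fin N → Fin 4 → Fin N → Fin 4 → ℝ)
    (N₀ : Fin N → ℝ)
    (K : Fin 4 → Fin 4 → ℝ)
    (a : Fin N → ℝ)
    (a₂ : Fin N → Fin N → ℝ)
    (hKtrace : ∑ m, K m m = 0)
    (hN₀inv : ∀ A : Fin N, ∑ D, ∑ m, ∑ n, N₀ D * C D m A n * K n m = 0)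
    (hcoeff : ∀ (B : Fin N) (m n : Fin 4),
      (∑ A, a A * C B m A n)
        + 2 * (∑ A, ∑ D, a₂ A B * C D m A n * N₀ D)
        + a B * (if m = n then 1 else 0) = 0) :
    ∀ B : Fin N, ∑ A, ∑ m, ∑ n, a A * C B m A n * K n m = 0 := by
  intro B
  let Cm : Fin N → Fin N → Matrix (Fin 4) (Fin 4) ℝ := fun D A => of fun m n => C D m A n
  have htraceC (D A : Fin N) : trace (Cm D A * of K) = ∑ m, ∑ n, C D m A n * K n m :=
    trace_mul_eq_sum_sum _ _
  have hN₀inv' (A : Fin N) : trace ((∑ D, N₀ D • Cm D A) * of K) = 0 := by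
    simpa only [trace_sum_smul_mul, htraceC, mul_sum, mul_assoc] using hN₀inv A
  have hcoeff' : (∑ A, a A • Cm B A) + (∑ A, (2 * a₂ A B) • ∑ D, N₀ D • Cm D A)
      + a B • 1 = 0 := by
    ext m n
    simp only [Cm, Matrix.add_apply, Matrix.sum_apply, Matrix.smul_apply, of_apply, smul_eq_mul,
      Matrix.one_apply, Matrix.zero_apply]
    convert hcoeff B m n using 3
    simp only [mul_sum]
    exact sum_congr rfl fun A _ => sum_congr rfl fun D _ => by ring
  have hmain := trace_mul_eq_zero_of_add_add_smul_one_eq_zero (K := of K) hcoeff'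
    (by simp only [trace_sum_smul_mul, hN₀inv', mul_zero, sum_const_zero]) hKtrace
  simpa only [trace_sum_smul_mul, htraceC, mul_sum, mul_assoc] using hmain

/-- Contracting the first equation of the second-order expansion-coefficient
system with a traceless generator `K` leaving the expansion point `N₀` invariant shows that the
first-order expansion coefficient `a` is itself invariant under `K`. -/
theorem first_order_coefficient_lorentz_invariant
    (N : ℕ) (hN : 0 < N)
    (C : Fin N → Fin 4 → Fin N → Fin 4 → ℝ)
    (N₀ : Fin N → ℝ)
    (K : Fin 4 → Fin 4 → ℝ)
    (a : Fin N → ℝ)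
    (a₂ : Fin N → Fin N → ℝ)
    (hKtrace : ∑ m, K m m = 0)
    (hN₀inv : ∀ A : Fin N, ∑ D, ∑ m, ∑ n, N₀ D * C D m A n * K n m = 0)
    (hcoeff : ∀ (B : Fin N) (m n : Fin 4),
      (∑ A, a A * C B m A n)
        + 2 * (∑ A, ∑ D, a₂ A B * C D m A n * N₀ D)
        + a B * (if m = n then 1 else 0) = 0) :
    ∀ B : Fin N, ∑ A, ∑ m, ∑ n, a A * C B m A n * K n m = 0 :=
  first_order_coefficient_lorentz_invariant_general N C N₀ K a a₂ hKtrace hN₀inv hcoeff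
end

section
/- Define N : Fin 4 → Fin 4 → Fin 4 → Fin 4 → ℝ by N a b c d = η a c * η b d − η a d * η b c − ε a b c d. Then for every infinitesimal Lorentz transformation K : Fin 4 → Fin 4 → ℝ and all a, b, c, d : Fin 4, (∑_e K e a * N e b c d) + (∑_e K e b * N a e c d) + (∑_e K e c * N a b e d) + (∑_e K e d * N a b c e) = 0. -/
/-- The Minkowski metric `η` on `Fin 4`: `η 0 0 = 1`, `η i i = -1` for `i ≠ 0`, zero otherwise. -/
def minkEta (a b : Fin 4) : ℝ :=
  if a = b then (if a = 0 then 1 else -1) else 0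

/-- The Levi-Civita symbol `ε a b c d`: the sign of the permutation sending `(0,1,2,3)` to
`(a,b,c,d)` when `a,b,c,d` are pairwise distinct, and `0` otherwise. -/
noncomputable def levicivita (a b c d : Fin 4) : ℝ :=
  if h : Function.Bijective ![a, b, c, d] then
    ((Equiv.Perm.sign (Equiv.ofBijective ![a, b, c, d] h) : ℤ) : ℝ)
  else 0

/-- The Lorentz-invariant expansion point of perturbative area metric gravity:
`N_{abcd} = 2 η_{c[a} η_{b]d} − ε_{abcd}`. -/
noncomputable def areaExpansionPoint (a b c d : Fin 4) : ℝ :=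
  minkEta a c * minkEta b d - minkEta a d * minkEta b c - levicivita a b c d

noncomputable def lcInt (a b c d : Fin 4) : ℤ :=
  if h : Function.Bijective ![a, b, c, d] then
    (Equiv.Perm.sign (Equiv.ofBijective ![a, b, c, d] h) : ℤ)
  else 0

def etaInt (a b : Fin 4) : ℤ := if a = b then (if a = 0 then 1 else -1) else 0

noncomputable def nInt (a b c d : Fin 4) : ℤ :=
  etaInt a c * etaInt b d - etaInt a d * etaInt b c - lcInt a b c d

def gInt (a b c d : Fin 4) : ℤ :=
  ((b:ℤ)-a).sign * ((c:ℤ)-a).sign * ((d:ℤ)-a).sign *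
  ((c:ℤ)-b).sign * ((d:ℤ)-b).sign * ((d:ℤ)-c).sign

def nG (a b c d : Fin 4) : ℤ :=
  etaInt a c * etaInt b d - etaInt a d * etaInt b c - gInt a b c d

lemma lc_g : ∀ a b c d : Fin 4, lcInt a b c d = gInt a b c d := by decide

lemma nInt_eq (a b c d : Fin 4) : nInt a b c d = nG a b c d := by
  simp [nInt, nG, lc_g]

lemma lc_cast (a b c d : Fin 4) : levicivita a b c d = (lcInt a b c d : ℝ) := by
  unfold levicivita lcInt; split <;> simp

lemma eta_cast (a b : Fin 4) : minkEta a b = (etaInt a b : ℝ) := by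
  unfold minkEta etaInt; split_ifs <;> simp

lemma aep_cast (a b c d : Fin 4) : areaExpansionPoint a b c d = (nG a b c d : ℝ) := by
  rw [← nInt_eq]
  simp [areaExpansionPoint, nInt, lc_cast, eta_cast]

def B1 (e x : Fin 4) : ℤ := if e = 0 ∧ x = 1 ∨ e = 1 ∧ x = 0 then 1 else 0
def B2 (e x : Fin 4) : ℤ := if e = 0 ∧ x = 2 ∨ e = 2 ∧ x = 0 then 1 else 0
def B3 (e x : Fin 4) : ℤ := if e = 0 ∧ x = 3 ∨ e = 3 ∧ x = 0 then 1 else 0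
def B4 (e x : Fin 4) : ℤ := if e = 1 ∧ x = 2 then 1 else if e = 2 ∧ x = 1 then -1 else 0
def B5 (e x : Fin 4) : ℤ := if e = 1 ∧ x = 3 then 1 else if e = 3 ∧ x = 1 then -1 else 0
def B6 (e x : Fin 4) : ℤ := if e = 2 ∧ x = 3 then 1 else if e = 3 ∧ x = 2 then -1 else 0

lemma key1 : ∀ a b c d : Fin 4,
    (∑ e, B1 e a * nG e b c d) + (∑ e, B1 e b * nG a e c d)
      + (∑ e, B1 e c * nG a b e d) + (∑ e, B1 e d * nG a b c e) = 0 := by decide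
lemma key2 : ∀ a b c d : Fin 4,
    (∑ e, B2 e a * nG e b c d) + (∑ e, B2 e b * nG a e c d)
      + (∑ e, B2 e c * nG a b e d) + (∑ e, B2 e d * nG a b c e) = 0 := by decide
lemma key3 : ∀ a b c d : Fin 4,
    (∑ e, B3 e a * nG e b c d) + (∑ e, B3 e b * nG a e c d)
      + (∑ e, B3 e c * nG a b e d) + (∑ e, B3 e d * nG a b c e) = 0 := by decide
lemma key4 : ∀ a b c d : Fin 4,
    (∑ e, B4 e a * nG e b c d) + (∑ e, B4 e b * nG a e c d)
      + (∑ e, B4 e c * nG a b e d) + (∑ e, B4 e d * nG a b c e) = 0 := by decide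
lemma key5 : ∀ a b c d : Fin 4,
    (∑ e, B5 e a * nG e b c d) + (∑ e, B5 e b * nG a e c d)
      + (∑ e, B5 e c * nG a b e d) + (∑ e, B5 e d * nG a b c e) = 0 := by decide
lemma key6 : ∀ a b c d : Fin 4,
    (∑ e, B6 e a * nG e b c d) + (∑ e, B6 e b * nG a e c d)
      + (∑ e, B6 e c * nG a b e d) + (∑ e, B6 e d * nG a b c e) = 0 := by decide

lemma keyR1 (a b c d : Fin 4) :
    (∑ e, (B1 e a : ℝ) * areaExpansionPoint e b c d) + (∑ e, (B1 e b : ℝ) * areaExpansionPoint a e c d)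
      + (∑ e, (B1 e c : ℝ) * areaExpansionPoint a b e d) + (∑ e, (B1 e d : ℝ) * areaExpansionPoint a b c e) = 0 := by
  simp only [aep_cast]; exact_mod_cast key1 a b c d

lemma keyR2 (a b c d : Fin 4) :
    (∑ e, (B2 e a : ℝ) * areaExpansionPoint e b c d) + (∑ e, (B2 e b : ℝ) * areaExpansionPoint a e c d)
      + (∑ e, (B2 e c : ℝ) * areaExpansionPoint a b e d) + (∑ e, (B2 e d : ℝ) * areaExpansionPoint a b c e) = 0 := by
  simp only [aep_cast]; exact_mod_cast key2 a b c d

lemma keyR3 (a b c d : Fin 4) :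
    (∑ e, (B3 e a : ℝ) * areaExpansionPoint e b c d) + (∑ e, (B3 e b : ℝ) * areaExpansionPoint a e c d)
      + (∑ e, (B3 e c : ℝ) * areaExpansionPoint a b e d) + (∑ e, (B3 e d : ℝ) * areaExpansionPoint a b c e) = 0 := by
  simp only [aep_cast]; exact_mod_cast key3 a b c d

lemma keyR4 (a b c d : Fin 4) :
    (∑ e, (B4 e a : ℝ) * areaExpansionPoint e b c d) + (∑ e, (B4 e b : ℝ) * areaExpansionPoint a e c d)
      + (∑ e, (B4 e c : ℝ) * areaExpansionPoint a b e d) + (∑ e, (B4 e d : ℝ) * areaExpansionPoint a b c e) = 0 := by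
  simp only [aep_cast]; exact_mod_cast key4 a b c d

lemma keyR5 (a b c d : Fin 4) :
    (∑ e, (B5 e a : ℝ) * areaExpansionPoint e b c d) + (∑ e, (B5 e b : ℝ) * areaExpansionPoint a e c d)
      + (∑ e, (B5 e c : ℝ) * areaExpansionPoint a b e d) + (∑ e, (B5 e d : ℝ) * areaExpansionPoint a b c e) = 0 := by
  simp only [aep_cast]; exact_mod_cast key5 a b c d

lemma keyR6 (a b c d : Fin 4) :
    (∑ e, (B6 e a : ℝ) * areaExpansionPoint e b c d) + (∑ e, (B6 e b : ℝ) * areaExpansionPoint a e c d)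
      + (∑ e, (B6 e c : ℝ) * areaExpansionPoint a b e d) + (∑ e, (B6 e d : ℝ) * areaExpansionPoint a b c e) = 0 := by
  simp only [aep_cast]; exact_mod_cast key6 a b c d

/-- The expansion point `N` of perturbative area metric gravity is invariant
under every infinitesimal Lorentz transformation `K`. -/
theorem areaExpansionPoint_lorentz_invariant
    (K : Fin 4 → Fin 4 → ℝ)
    (hK : ∀ a b : Fin 4, (∑ e, K e a * minkEta e b) + (∑ e, K e b * minkEta a e) = 0) :
    ∀ a b c d : Fin 4,
      (∑ e, K e a * areaExpansionPoint e b c d)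
        + (∑ e, K e b * areaExpansionPoint a e c d)
        + (∑ e, K e c * areaExpansionPoint a b e d)
        + (∑ e, K e d * areaExpansionPoint a b c e) = 0 := by
  have c00 := hK 0 0; have c11 := hK 1 1; have c22 := hK 2 2; have c33 := hK 3 3
  have c01 := hK 0 1; have c02 := hK 0 2; have c03 := hK 0 3
  have c12 := hK 1 2; have c13 := hK 1 3; have c23 := hK 2 3
  simp [minkEta, Fin.sum_univ_four] at c00 c11 c22 c33 c01 c02 c03 c12 c13 c23
  have hrep : ∀ e x : Fin 4, K e x =
      K 0 1 * (B1 e x : ℝ) + K 0 2 * (B2 e x : ℝ) + K 0 3 * (B3 e x : ℝ)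
        + K 1 2 * (B4 e x : ℝ) + K 1 3 * (B5 e x : ℝ) + K 2 3 * (B6 e x : ℝ) := by
    intro e x
    fin_cases e <;> fin_cases x <;>
      simp [B1, B2, B3, B4, B5, B6] <;> linarith
  set k1 := K 0 1; set k2 := K 0 2; set k3 := K 0 3
  set k4 := K 1 2; set k5 := K 1 3; set k6 := K 2 3
  intro a b c d
  simp only [hrep, add_mul, Finset.sum_add_distrib, mul_assoc, ← Finset.mul_sum]
  linear_combination k1 * keyR1 a b c d + k2 * keyR2 a b c d + k3 * keyR3 a b c d
    + k4 * keyR4 a b c d + k5 * keyR5 a b c d + k6 * keyR6 a b c d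
end

section
/- The subspace of maps T : Fin 4 → Fin 4 → ℝ satisfying, for all a, b : Fin 4, the symmetry T a b = T b a together with infinitesimal Lorentz invariance — i.e. for every infinitesimal Lorentz transformation K and all a, b, (∑_e K e a * T e b) + (∑_e K e b * T a e) = 0 — is a real vector space of dimension 1, spanned by the Minkowski metric η. -/
/-- `K` is an infinitesimal Lorentz transformation. -/
def IsInfLorentz (K : Fin 4 → Fin 4 → ℝ) : Prop :=
  ∀ a b : Fin 4, (∑ e, K e a * minkEta e b) + (∑ e, K e b * minkEta a e) = 0

/-- The subspace of symmetric `(0,2)`-tensors invariant under all infinitesimal Lorentz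
transformations. -/
def metricFirstOrderCoeffSpace : Submodule ℝ (Fin 4 → Fin 4 → ℝ) where
  carrier := {T | (∀ a b, T a b = T b a) ∧
    (∀ K : Fin 4 → Fin 4 → ℝ, IsInfLorentz K → ∀ a b : Fin 4,
      (∑ e, K e a * T e b) + (∑ e, K e b * T a e) = 0)}
  add_mem' := by
    rintro x y ⟨hx1, hx2⟩ ⟨hy1, hy2⟩
    refine ⟨fun a b => ?_, fun K hK a b => ?_⟩
    · simp only [Pi.add_apply]; rw [hx1 a b, hy1 a b]
    · have hx := hx2 K hK a b
      have hy := hy2 K hK a b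
      simp only [Pi.add_apply, mul_add, Finset.sum_add_distrib]
      linarith
  zero_mem' := by
    refine ⟨fun a b => rfl, fun K hK a b => by simp⟩
  smul_mem' := by
    rintro r x ⟨hx1, hx2⟩
    refine ⟨fun a b => ?_, fun K hK a b => ?_⟩
    · simp only [Pi.smul_apply, smul_eq_mul]; rw [hx1 a b]
    · have h := hx2 K hK a b
      have e1 : (∑ e, K e a * (r • x) e b) = r * ∑ e, K e a * x e b := by
        rw [Finset.mul_sum]
        exact Finset.sum_congr rfl fun e _ => by
          simp only [Pi.smul_apply, smul_eq_mul]; ring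
      have e2 : (∑ e, K e b * (r • x) a e) = r * ∑ e, K e b * x a e := by
        rw [Finset.mul_sum]
        exact Finset.sum_congr rfl fun e _ => by
          simp only [Pi.smul_apply, smul_eq_mul]; ring
      rw [e1, e2]
      linear_combination r * h

/-- Boost generator in direction `i`. -/
def lorB (i : Fin 4) : Fin 4 → Fin 4 → ℝ := fun e a =>
  if e = 0 ∧ a = i then 1 else if e = i ∧ a = 0 then 1 else 0

/-- Rotation generator in the `i`-`j` plane. -/
def lorR (i j : Fin 4) : Fin 4 → Fin 4 → ℝ := fun e a =>
  if e = i ∧ a = j then 1 else if e = j ∧ a = i then -1 else 0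

lemma finmk0 (h : 0 < 4) : (⟨0, h⟩ : Fin 4) = 0 := rfl
lemma finmk1 (h : 1 < 4) : (⟨1, h⟩ : Fin 4) = 1 := rfl
lemma finmk2 (h : 2 < 4) : (⟨2, h⟩ : Fin 4) = 2 := rfl
lemma finmk3 (h : 3 < 4) : (⟨3, h⟩ : Fin 4) = 3 := rfl

lemma isInfLorentz_lorB (i : Fin 4) (hi : i ≠ 0) : IsInfLorentz (lorB i) := by
  intro a b
  fin_cases i <;> simp_all <;>
  fin_cases a <;> fin_cases b <;>
  simp [lorB, minkEta, Fin.sum_univ_four, finmk0, finmk1, finmk2, finmk3]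

lemma isInfLorentz_lorR (i j : Fin 4) (hi : i ≠ 0) (hj : j ≠ 0) (hij : i ≠ j) :
    IsInfLorentz (lorR i j) := by
  intro a b
  fin_cases i <;> fin_cases j <;> simp_all <;>
  fin_cases a <;> fin_cases b <;>
  simp [lorR, minkEta, Fin.sum_univ_four, finmk0, finmk1, finmk2, finmk3]

lemma eta_mem : (fun a b => minkEta a b) ∈ metricFirstOrderCoeffSpace := by
  constructor
  · intro a b; fin_cases a <;> fin_cases b <;> simp [minkEta]
  · intro K hK a b; exact hK a b

lemma mem_imp_smul_eta (T : Fin 4 → Fin 4 → ℝ)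
    (hT : T ∈ metricFirstOrderCoeffSpace) :
    T = (T 0 0) • (fun a b => minkEta a b) := by
  obtain ⟨h1, h2⟩ := hT
  have hb1 := h2 (lorB 1) (isInfLorentz_lorB 1 (by decide)) 0 0
  have hb2 := h2 (lorB 2) (isInfLorentz_lorB 2 (by decide)) 0 0
  have hb3 := h2 (lorB 3) (isInfLorentz_lorB 3 (by decide)) 0 0
  have hd1 := h2 (lorB 1) (isInfLorentz_lorB 1 (by decide)) 0 1
  have hd2 := h2 (lorB 2) (isInfLorentz_lorB 2 (by decide)) 0 2
  have hd3 := h2 (lorB 3) (isInfLorentz_lorB 3 (by decide)) 0 3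
  have hr12 := h2 (lorR 1 3) (isInfLorentz_lorR 1 3 (by decide) (by decide) (by decide)) 3 2
  have hr13 := h2 (lorR 1 2) (isInfLorentz_lorR 1 2 (by decide) (by decide) (by decide)) 2 3
  have hr23 := h2 (lorR 2 1) (isInfLorentz_lorR 2 1 (by decide) (by decide) (by decide)) 1 3
  simp [lorB, lorR, Fin.sum_univ_four] at hb1 hb2 hb3 hd1 hd2 hd3 hr12 hr13 hr23
  have s01 := h1 0 1
  have s02 := h1 0 2
  have s03 := h1 0 3
  have s12 := h1 1 2
  have s13 := h1 1 3
  have s23 := h1 2 3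
  funext a b
  fin_cases a <;> fin_cases b <;>
  simp [Pi.smul_apply, minkEta, finmk0, finmk1, finmk2, finmk3] <;> linarith

/-- The space of Lorentz-invariant symmetric `(0,2)`-tensors has dimension 1 and
is spanned by the Minkowski metric `η`. -/
theorem metricFirstOrderCoeffSpace_eq_span_eta :
    Module.finrank ℝ metricFirstOrderCoeffSpace = 1 ∧
    metricFirstOrderCoeffSpace = Submodule.span ℝ {fun a b => minkEta a b} := by
  have hspan : metricFirstOrderCoeffSpace = Submodule.span ℝ {fun a b => minkEta a b} := by
    apply le_antisymm
    · intro T hT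
      rw [Submodule.mem_span_singleton]
      exact ⟨T 0 0, (mem_imp_smul_eta T hT).symm⟩
    · rw [Submodule.span_le, Set.singleton_subset_iff]
      exact eta_mem
  refine ⟨?_, hspan⟩
  rw [hspan, finrank_span_singleton]
  intro h
  have := congrFun (congrFun h 0) 0
  norm_num [minkEta] at this
end
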